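/- arXiv:math/0611243 — 2 statements merged into one kernel-verified Lean document; each statement's English description precedes it below -/
import Mathlib

section
/- Sufficiency of the dynamic programming equation for discrete Volterra control: if a function V satisfies V(i,β) = min_{ξ∈U} { V(i+1, β⊗ξ) + Φ(i, x(i;i,β), ξ) } for all 0 ≤ i ≤ N−1 and V(N,β) = Φ₀(x(N;N,β)), then V(i,β) = min over suffix controls u_{⟨i⟩} of J_{i,β}(u_{⟨i⟩}) for all i and β. -/
/-!
Since the state `x(i)` only depends on the controls at times `< i`, splitting off the first
term of `J_{i,β}(γ)` gives `J_{i,β}(γ) = Φ(i, x(i;i,β), γ i) + J_{i+1,β⊗γ i}(γ)`. Minimising first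
over the value `ξ = γ i` and then over the rest of `γ` shows that `(i, β) ↦ min_γ J_{i,β}(γ)`
satisfies the same recursion and terminal condition as `V`, and backward induction from `N`
identifies the two. As `J_{i,β}` only sees `γ` on `[i, N)` and `U` is finite, each `J_{i,β}` takes
finitely many values, so all the infima are minima.
-/

/-- Solution of the discrete controlled Volterra equation
`x k = x₀ k + ∑_{j<k} φ k j (x j) (u j)`. -/
noncomputable def traj {E U : Type*} [AddCommGroup E]
    (x₀ : ℕ → E) (φ : ℕ → ℕ → E → U → E) (u : ℕ → U) : ℕ → E
  | k => x₀ k + ∑ j : Fin k, φ k j (traj x₀ φ u j) (u j)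
  termination_by k => k
  decreasing_by exact j.isLt

/-- Parametrized cost `J_{i,β}(γ)`: the trajectory uses the prefix control `β`
on indices `< i` and the suffix control `γ` on indices `≥ i`, and the costs
accumulated are `∑_{j=i}^{N-1} Φ(j, x(j), γ j) + Φ₀(x N)`. -/
noncomputable def Jcost {E U : Type*} [AddCommGroup E] (N : ℕ)
    (x₀ : ℕ → E) (φ : ℕ → ℕ → E → U → E) (Φ : ℕ → E → U → ℝ) (Φ₀ : E → ℝ)
    (i : ℕ) (β γ : ℕ → U) : ℝ :=
  (∑ j ∈ Finset.Ico i N,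
      Φ j (traj x₀ φ (fun k => if k < i then β k else γ k) j) (γ j)) +
    Φ₀ (traj x₀ φ (fun k => if k < i then β k else γ k) N)

theorem ciInf_iInf_update_eq {α β γ : Type*} [DecidableEq α] [Nonempty β]
    [ConditionallyCompleteLattice γ] {f : (α → β) → γ} (hf : BddBelow (Set.range f)) (a : α) :
    ⨅ b, ⨅ g, f (Function.update g a b) = ⨅ g, f g := by
  have hinner : ∀ b, BddBelow (Set.range fun g => f (Function.update g a b)) := fun b =>
    hf.mono (Set.range_comp_subset_range _ f)
  obtain ⟨m, hm⟩ := hf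
  have houter : BddBelow (Set.range fun b => ⨅ g, f (Function.update g a b)) :=
    ⟨m, Set.forall_mem_range.2 fun b => le_ciInf fun g => hm ⟨_, rfl⟩⟩
  refine le_antisymm (le_ciInf fun g => ?_) (le_ciInf fun b => le_ciInf fun g => ?_)
  · calc ⨅ b, ⨅ g, f (Function.update g a b)
        ≤ ⨅ g', f (Function.update g' a (g a)) := ciInf_le houter (g a)
      _ ≤ f (Function.update g a (g a)) := ciInf_le (hinner (g a)) g
      _ = f g := by rw [Function.update_eq_self]
  · exact ciInf_le ⟨m, hm⟩ _

section Trajectory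

variable {E U : Type*} [AddCommGroup E] (x₀ : ℕ → E) (φ : ℕ → ℕ → E → U → E)

theorem traj_congr {u v : ℕ → U} {k : ℕ} (h : ∀ j < k, u j = v j) :
    traj x₀ φ u k = traj x₀ φ v k := by
  induction k using Nat.strong_induction_on with
  | _ k ih =>
    rw [traj, traj]
    congr 1
    refine Finset.sum_congr rfl fun j _ => ?_
    rw [ih j j.isLt fun m hm => h m (hm.trans j.isLt), h j j.isLt]

end Trajectory

section Cost

variable {E U : Type*} [AddCommGroup E] (N : ℕ) (x₀ : ℕ → E) (φ : ℕ → ℕ → E → U → E)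
  (Φ : ℕ → E → U → ℝ) (Φ₀ : E → ℝ)

theorem Jcost_congr {i : ℕ} {β γ γ' : ℕ → U} (h : ∀ j, i ≤ j → j < N → γ j = γ' j) :
    Jcost N x₀ φ Φ Φ₀ i β γ = Jcost N x₀ φ Φ Φ₀ i β γ' := by
  have hu : ∀ j < N, (if j < i then β j else γ j) = (if j < i then β j else γ' j) := by
    intro j hj
    split_ifs with hji
    · rfl
    · exact h j (not_lt.1 hji) hj
  unfold Jcost
  congr 1
  · refine Finset.sum_congr rfl fun j hj => ?_
    obtain ⟨hij, hjN⟩ := Finset.mem_Ico.1 hj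
    rw [traj_congr x₀ φ fun m hm => hu m (hm.trans hjN), h j hij hjN]
  · rw [traj_congr x₀ φ hu]

theorem finite_range_Jcost [Finite U] (i : ℕ) (β : ℕ → U) :
    (Set.range (Jcost N x₀ φ Φ Φ₀ i β)).Finite := by
  refine (Set.finite_range fun g : Fin N → U =>
    Jcost N x₀ φ Φ Φ₀ i β fun k => if hk : k < N then g ⟨k, hk⟩ else β k).subset ?_
  rintro _ ⟨γ, rfl⟩
  exact ⟨fun k => γ k, Jcost_congr N x₀ φ Φ Φ₀ fun j _ hj => by simp [hj]⟩

theorem Jcost_self (β γ : ℕ → U) : Jcost N x₀ φ Φ Φ₀ N β γ = Φ₀ (traj x₀ φ β N) := by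
  simp only [Jcost, Finset.Ico_self, Finset.sum_empty, zero_add]
  exact congrArg Φ₀ (traj_congr x₀ φ fun j hj => if_pos hj)

theorem Jcost_update_self {i : ℕ} (hi : i < N) (β γ : ℕ → U) (ξ : U) :
    Jcost N x₀ φ Φ Φ₀ i β (Function.update γ i ξ) =
      Jcost N x₀ φ Φ Φ₀ (i + 1) (Function.update β i ξ) γ + Φ i (traj x₀ φ β i) ξ := by
  have hu : (fun k => if k < i then β k else Function.update γ i ξ k) =
      fun k => if k < i + 1 then Function.update β i ξ k else γ k := by
    funext k
    rcases lt_trichotomy k i with h | rfl | h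
    · simp [h, Nat.lt_succ_of_lt h, h.ne]
    · simp
    · simp [h.not_gt, h.ne', show ¬k < i + 1 by omega]
  have hx : traj x₀ φ (fun k => if k < i + 1 then Function.update β i ξ k else γ k) i =
      traj x₀ φ β i :=
    traj_congr x₀ φ fun j hj => by simp [Nat.lt_succ_of_lt hj, hj.ne]
  have hγ : ∀ j ∈ Finset.Ico (i + 1) N, Function.update γ i ξ j = γ j := fun j hj =>
    Function.update_of_ne (Nat.succ_le_iff.1 (Finset.mem_Ico.1 hj).1).ne' _ _
  unfold Jcost
  rw [hu, Finset.sum_eq_sum_Ico_succ_bot hi, hx, Function.update_self,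
    Finset.sum_congr rfl fun j hj => congrArg _ (hγ j hj)]
  ring

theorem iInf_Jcost_of_lt [Finite U] {i : ℕ} (hi : i < N) (β : ℕ → U) :
    ⨅ γ, Jcost N x₀ φ Φ Φ₀ i β γ =
      ⨅ ξ, (⨅ γ, Jcost N x₀ φ Φ Φ₀ (i + 1) (Function.update β i ξ) γ) +
        Φ i (traj x₀ φ β i) ξ := by
  have : Nonempty U := ⟨β 0⟩
  rw [← ciInf_iInf_update_eq (finite_range_Jcost N x₀ φ Φ Φ₀ i β).bddBelow i]
  simp_rw [Jcost_update_self N x₀ φ Φ Φ₀ hi,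
    ciInf_add (finite_range_Jcost N x₀ φ Φ Φ₀ (i + 1) _).bddBelow]

end Cost

theorem stmt7_general {E U : Type*} [AddCommGroup E] [Fintype U] (N : ℕ)
    (x₀ : ℕ → E) (φ : ℕ → ℕ → E → U → E) (Φ : ℕ → E → U → ℝ) (Φ₀ : E → ℝ)
    (V : ℕ → (ℕ → U) → ℝ)
    (hterm : ∀ β : ℕ → U, V N β = Φ₀ (traj x₀ φ β N))
    (hrec : ∀ i < N, ∀ β : ℕ → U,
      V i β = ⨅ ξ : U, (V (i + 1) (Function.update β i ξ) +
        Φ i (traj x₀ φ β i) ξ)) :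
    ∀ i ≤ N, ∀ β : ℕ → U,
      V i β = ⨅ γ : ℕ → U, Jcost N x₀ φ Φ Φ₀ i β γ := by
  intro i hi
  induction hi using Nat.decreasingInduction with
  | self =>
    intro β
    have : Nonempty U := ⟨β 0⟩
    simp_rw [hterm, Jcost_self, ciInf_const]
  | of_succ i hi ih =>
    intro β
    rw [hrec i hi β, iInf_Jcost_of_lt N x₀ φ Φ Φ₀ hi]
    simp_rw [ih]

/-- Sufficiency of the dynamic programming equation for discrete Volterra
control (Theorem 2.2, first assertion): if `V` satisfies the recursion
`V i β = min_ξ { V (i+1) (β⊗ξ) + Φ(i, x(i;i,β), ξ) }` for `i < N` together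
with the terminal condition `V N β = Φ₀(x(N;N,β))`, then
`V i β = min over suffix controls γ of J_{i,β}(γ)` for all `i ≤ N` and `β`. -/
theorem stmt7 {E U : Type*} [AddCommGroup E] [Fintype U] [Nonempty U] (N : ℕ)
    (x₀ : ℕ → E) (φ : ℕ → ℕ → E → U → E) (Φ : ℕ → E → U → ℝ) (Φ₀ : E → ℝ)
    (V : ℕ → (ℕ → U) → ℝ)
    (hterm : ∀ β : ℕ → U, V N β = Φ₀ (traj x₀ φ β N))
    (hrec : ∀ i < N, ∀ β : ℕ → U,
      V i β = ⨅ ξ : U, (V (i + 1) (Function.update β i ξ) +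
        Φ i (traj x₀ φ β i) ξ)) :
    ∀ i ≤ N, ∀ β : ℕ → U,
      V i β = ⨅ γ : ℕ → U, Jcost N x₀ φ Φ Φ₀ i β γ :=
  stmt7_general N x₀ φ Φ Φ₀ V hterm hrec
end

section
/- Forward recursion constructs an optimal control: if u* is constructed so that V(0,∅) = V(1, u*(0)) + Φ(0, x₀(0), u*(0)) and V(i, u*₍ᵢ₎) = V(i+1, u*₍ᵢ₎ ⊗ u*(i)) + Φ(i, x(i;i,u*₍ᵢ₎), u*(i)) for 1 ≤ i ≤ N−1, where V satisfies the dynamic programming recursion, then V(i, ũ*₍ᵢ₎) = J_{i, ũ*₍ᵢ₎}(u*_{⟨i⟩}) for all i ∈ {0,…,N}; in particular u* is an optimal control. -/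
lemma traj_congr_s9 {E U : Type*} [AddCommGroup E]
    (x₀ : ℕ → E) (φ : ℕ → ℕ → E → U → E) (u u' : ℕ → U) :
    ∀ n, (∀ k < n, u k = u' k) → traj x₀ φ u n = traj x₀ φ u' n := by
  intro n
  induction n using Nat.strong_induction_on with
  | _ n ih =>
    intro h
    rw [traj, traj]
    congr 1
    refine Finset.sum_congr rfl fun j _ => ?_
    rw [ih j j.isLt (fun k hk => h k (hk.trans j.isLt)), h j j.isLt]

/-- Forward recursion constructs an optimal control (Theorem 2.3): if `V`
satisfies the dynamic programming recursion and `u*` is constructed so that at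
each step `i < N` it achieves the minimum, i.e.
`V i u*₍ᵢ₎ = V (i+1) (u*₍ᵢ₎ ⊗ u*(i)) + Φ(i, x(i;i,u*₍ᵢ₎), u*(i))`, then
`V i ũ*₍ᵢ₎ = J_{i,ũ*₍ᵢ₎}(u*_{⟨i⟩})` for all `i ≤ N`; in particular `u*` is an
optimal control.  (Prefixes of `u*` are encoded by `u*` itself, since only the
first `i` values of the second argument of `V` and `Jcost i` matter.) -/
theorem stmt9 {E U : Type*} [AddCommGroup E] [Fintype U] [Nonempty U] (N : ℕ)
    (x₀ : ℕ → E) (φ : ℕ → ℕ → E → U → E) (Φ : ℕ → E → U → ℝ) (Φ₀ : E → ℝ)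
    (V : ℕ → (ℕ → U) → ℝ)
    (hterm : ∀ β : ℕ → U, V N β = Φ₀ (traj x₀ φ β N))
    (hrec : ∀ i < N, ∀ β : ℕ → U,
      V i β = ⨅ ξ : U, (V (i + 1) (Function.update β i ξ) +
        Φ i (traj x₀ φ β i) ξ))
    (ustar : ℕ → U)
    (hfwd : ∀ i < N,
      V i ustar = V (i + 1) ustar + Φ i (traj x₀ φ ustar i) (ustar i)) :
    (∀ i ≤ N, V i ustar = Jcost N x₀ φ Φ Φ₀ i ustar ustar) ∧
    (∀ u : ℕ → U,
      Jcost N x₀ φ Φ Φ₀ 0 ustar ustar ≤ Jcost N x₀ φ Φ Φ₀ 0 u u) := by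
  -- Jcost with β = γ simplifies
  have hJ : ∀ (i : ℕ) (u : ℕ → U), Jcost N x₀ φ Φ Φ₀ i u u =
      (∑ j ∈ Finset.Ico i N, Φ j (traj x₀ φ u j) (u j)) + Φ₀ (traj x₀ φ u N) := by
    intro i u
    have : (fun k => if k < i then u k else u k) = u := funext fun k => ite_self _
    simp [Jcost, this]
  -- Part 1 : downward induction, stated via distance to N
  have key : ∀ d i, i + d = N → V i ustar = Jcost N x₀ φ Φ Φ₀ i ustar ustar := by
    intro d
    induction d with
    | zero =>
      intro i hi
      simp only [Nat.add_zero] at hi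
      subst hi
      rw [hJ, hterm, Finset.Ico_self, Finset.sum_empty, zero_add]
    | succ d ih =>
      intro i hi
      have hiN : i < N := by omega
      have h1 : i + 1 + d = N := by omega
      rw [hfwd i hiN, ih (i + 1) h1, hJ, hJ,
        Finset.sum_eq_sum_Ico_succ_bot hiN]
      ring
  -- V i β depends only on β restricted to < i
  have Vcongr : ∀ d i, i + d = N → ∀ β β' : ℕ → U,
      (∀ k < i, β k = β' k) → V i β = V i β' := by
    intro d
    induction d with
    | zero =>
      intro i hi β β' h
      simp only [Nat.add_zero] at hi; subst hi
      rw [hterm, hterm, traj_congr_s9 x₀ φ β β' _ h]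
    | succ d ih =>
      intro i hi β β' h
      have hiN : i < N := by omega
      rw [hrec i hiN, hrec i hiN]
      congr 1
      funext ξ
      have h' : ∀ k < i + 1, Function.update β i ξ k = Function.update β' i ξ k := by
        intro k hk
        rcases eq_or_ne k i with rfl | hne
        · simp
        · simp [Function.update_of_ne hne, h k (by omega)]
      rw [ih (i + 1) (by omega) _ _ h', traj_congr_s9 x₀ φ β β' i h]
  -- V i u ≤ cost of u from i
  have Vle : ∀ d i, i + d = N → ∀ u : ℕ → U,
      V i u ≤ (∑ j ∈ Finset.Ico i N, Φ j (traj x₀ φ u j) (u j)) + Φ₀ (traj x₀ φ u N) := by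
    intro d
    induction d with
    | zero =>
      intro i hi u
      simp only [Nat.add_zero] at hi; subst hi
      rw [hterm, Finset.Ico_self, Finset.sum_empty, zero_add]
    | succ d ih =>
      intro i hi u
      have hiN : i < N := by omega
      rw [hrec i hiN u]
      have hb : BddBelow (Set.range fun ξ : U =>
          V (i + 1) (Function.update u i ξ) + Φ i (traj x₀ φ u i) ξ) :=
        (Set.finite_range _).bddBelow
      calc (⨅ ξ : U, V (i + 1) (Function.update u i ξ) + Φ i (traj x₀ φ u i) ξ)
          ≤ V (i + 1) (Function.update u i (u i)) + Φ i (traj x₀ φ u i) (u i) :=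
            ciInf_le hb (u i)
        _ = V (i + 1) u + Φ i (traj x₀ φ u i) (u i) := by rw [Function.update_eq_self]
        _ ≤ ((∑ j ∈ Finset.Ico (i+1) N, Φ j (traj x₀ φ u j) (u j)) + Φ₀ (traj x₀ φ u N))
            + Φ i (traj x₀ φ u i) (u i) := by
            have := ih (i + 1) (by omega) u
            linarith
        _ = (∑ j ∈ Finset.Ico i N, Φ j (traj x₀ φ u j) (u j)) + Φ₀ (traj x₀ φ u N) := by
            rw [Finset.sum_eq_sum_Ico_succ_bot hiN]; ring
  constructor
  · intro i hi
    exact key (N - i) i (by omega)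
  · intro u
    have h0 : V 0 ustar = V 0 u := Vcongr N 0 (by omega) _ _ (by omega)
    rw [← key N 0 (by omega), h0, hJ]
    exact Vle N 0 (by omega) u
end
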